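/- In the group algebra of the weight lattice of osp(2,2n), suppose χ is an integral weight with (χ+ρ, ε+δ_j) = (χ+ρ, ε−δ_j) = 0 for some 1 ≤ j ≤ n. Then {K^{ε+δ_j}_χ} = −{K^{ε−δ_j}_{χ−ε+δ_j}}. -/

import Mathlib

/-- The integral weight lattice of `osp(2,2n)`: coefficients of `ε` and of `δ₁, …, δ_n`. -/
abbrev Wt (n : ℕ) : Type := ℤ × (Fin n → ℤ)

/-- The group algebra of the weight lattice over `ℂ`. -/
abbrev GA (n : ℕ) : Type := AddMonoidAlgebra ℂ (Wt n)

/-- `e^v` in the group algebra. -/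
noncomputable def eWt (n : ℕ) (v : Wt n) : GA n := AddMonoidAlgebra.single v 1

/-- The weight `ε`. -/
def eps (n : ℕ) : Wt n := (1, 0)

/-- The weight `δ_i` (indexing `δ_{i+1}` by `i : Fin n`). -/
def delta (n : ℕ) (i : Fin n) : Wt n := (0, fun r => if r = i then 1 else 0)

/-- `ρ₀ = Σ_{i=1}^n (n+1−i) δ_i`. -/
def rho0 (n : ℕ) : Wt n := (0, fun i => (n : ℤ) - (i : ℤ))

/-- `ρ = ρ₀ − ρ₁ = ρ₀ − n ε`. -/
def rho (n : ℕ) : Wt n := (-(n : ℤ), fun i => (n : ℤ) - (i : ℤ))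

/-- The pairing `(v, ε + δ_i)` for the form `(ε,ε)=1`, `(δ_i,δ_j)=−δ_{ij}`, `(ε,δ_i)=0`. -/
def pairPlus (n : ℕ) (v : Wt n) (i : Fin n) : ℤ := v.1 - v.2 i

/-- The pairing `(v, ε − δ_i)`. -/
def pairMinus (n : ℕ) (v : Wt n) (i : Fin n) : ℤ := v.1 + v.2 i

/-- The odd positive root attached to `(i, s)`: `ε + δ_i` if `s = true`, `ε − δ_i` otherwise. -/
def oddRoot (n : ℕ) (a : Fin n × Bool) : Wt n :=
  if a.2 then eps n + delta n a.1 else eps n - delta n a.1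

/-- The action of the Weyl group element `(σ, s) ∈ S_n ⋉ (ℤ/2)^n` on weights: it fixes `ε` and
permutes and changes signs of the `δ_i`. -/
def wAct (n : ℕ) (σ : Equiv.Perm (Fin n)) (s : Fin n → ℤˣ) (v : Wt n) : Wt n :=
  (v.1, fun i => (s i : ℤ) * v.2 (σ⁻¹ i))

/-- The alternation `{f} = Σ_{w ∈ W₀} sgn(w) · w(f)` over `W₀ = S_n ⋉ (ℤ/2)^n`. -/
noncomputable def alt (n : ℕ) (f : GA n) : GA n :=
  ∑ σ : Equiv.Perm (Fin n), ∑ s : Fin n → ℤˣ,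
    ((((Equiv.Perm.sign σ : ℤ) * ∏ i, (s i : ℤ) : ℤ) : ℂ)) •
      AddMonoidAlgebra.ofCoeff (Finsupp.mapDomain (wAct n σ s) f.coeff)

/-- `K^α_ν = e^{ν+ρ₀} Π_{β ∈ R₁⁺ \ {α}} (1 − e^{−β})`, with `α = oddRoot n a`. -/
noncomputable def Kal (n : ℕ) (χ : Wt n) (a : Fin n × Bool) : GA n :=
  eWt n (χ + rho0 n) *
    ∏ b ∈ (Finset.univ : Finset (Fin n × Bool)).erase a,
      (1 - eWt n (-(oddRoot n b)))

/-!
Adding the two sides gives `(e^{χ+ρ₀} − e^{χ+ρ₀−2ε}) · Π_{β ≠ ε ± δ_j} (1 − e^{−β})`. The two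
hypotheses together say that `χ + ρ₀` has vanishing `δ_j`-coordinate, so every factor is fixed by
the reflection `δ_j ↦ −δ_j`. That reflection has sign `−1`, so the alternation of a fixed element
equals its own negative and vanishes.
-/

section

variable {n : ℕ}

def wActHom (σ : Equiv.Perm (Fin n)) (s : Fin n → ℤˣ) : Wt n →+ Wt n where
  toFun := wAct n σ s
  map_zero' := by ext <;> simp [wAct]
  map_add' u v := by ext <;> simp [wAct, mul_add]

noncomputable def weylAct (σ : Equiv.Perm (Fin n)) (s : Fin n → ℤˣ) : GA n →+* GA n :=
  AddMonoidAlgebra.mapDomainRingHom ℂ (wActHom σ s)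

lemma alt_eq_sum_weylAct (f : GA n) :
    alt n f = ∑ σ : Equiv.Perm (Fin n), ∑ s : Fin n → ℤˣ,
      (((Equiv.Perm.sign σ : ℤ) * ∏ i, (s i : ℤ) : ℤ) : ℂ) • weylAct σ s f := rfl

lemma alt_add (f g : GA n) : alt n (f + g) = alt n f + alt n g := by
  simp only [alt_eq_sum_weylAct, map_add, smul_add, Finset.sum_add_distrib]

lemma eWt_add (u v : Wt n) : eWt n (u + v) = eWt n u * eWt n v := by
  simp [eWt, AddMonoidAlgebra.single_mul_single]

lemma weylAct_eWt (σ : Equiv.Perm (Fin n)) (s : Fin n → ℤˣ) (v : Wt n) :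
    weylAct σ s (eWt n v) = eWt n (wAct n σ s v) :=
  AddMonoidAlgebra.mapDomain_single

lemma weylAct_comp_weylAct_one (σ : Equiv.Perm (Fin n)) (s t : Fin n → ℤˣ) (f : GA n) :
    weylAct σ s (weylAct 1 t f) = weylAct σ (s * fun i => t (σ⁻¹ i)) f := by
  have : (wActHom σ s).comp (wActHom 1 t) = wActHom σ (s * fun i => t (σ⁻¹ i)) := by
    ext v i <;> simp [wActHom, wAct, mul_assoc]
  rw [weylAct, weylAct, weylAct, ← RingHom.comp_apply,
    ← AddMonoidAlgebra.mapDomainRingHom_comp, this]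

/-- The sign vector of the reflection `δ_j ↦ -δ_j ∈ W₀`. -/
def signFlip (j : Fin n) : Fin n → ℤˣ := Pi.mulSingle j (-1)

lemma prod_signFlip_comp (j : Fin n) (σ : Equiv.Perm (Fin n)) :
    ∏ i, ((signFlip j (σ⁻¹ i) : ℤˣ) : ℤ) = -1 := by
  rw [← Units.coe_prod, Equiv.prod_comp σ⁻¹ (signFlip j)]
  simp [signFlip]

lemma alt_weylAct_signFlip (j : Fin n) (f : GA n) :
    alt n (weylAct 1 (signFlip j) f) = -alt n f := by
  simp only [alt_eq_sum_weylAct, weylAct_comp_weylAct_one, ← Finset.sum_neg_distrib]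
  refine Finset.sum_congr rfl fun σ _ => ?_
  -- reindex by `w ↦ w · r_j`, which permutes `W₀` and multiplies the sign by `−1`
  refine Fintype.sum_equiv (Equiv.mulRight fun i => signFlip j (σ⁻¹ i)) _ _ fun s => ?_
  simp only [Equiv.coe_mulRight, Pi.mul_apply, Units.val_mul, Finset.prod_mul_distrib,
    prod_signFlip_comp, mul_neg, mul_one, Int.cast_neg, neg_smul, neg_neg]

lemma alt_eq_zero_of_weylAct_signFlip_eq {j : Fin n} {f : GA n}
    (hf : weylAct 1 (signFlip j) f = f) : alt n f = 0 :=
  have : IsAddTorsionFree (GA n) := .of_module_rat _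
  self_eq_neg.1 (by rw [← alt_weylAct_signFlip j f, hf])

lemma wAct_signFlip_of_snd_eq_zero {j : Fin n} {v : Wt n} (hv : v.2 j = 0) :
    wAct n 1 (signFlip j) v = v := by
  refine Prod.ext rfl (funext fun i => ?_)
  by_cases hij : i = j
  · subst hij
    simp [wAct, hv]
  · simp [wAct, signFlip, hij]

lemma weylAct_signFlip_eWt {j : Fin n} {v : Wt n} (hv : v.2 j = 0) :
    weylAct 1 (signFlip j) (eWt n v) = eWt n v := by
  rw [weylAct_eWt, wAct_signFlip_of_snd_eq_zero hv]

lemma Kal_add_Kal_sub_eps_add_delta (χ : Wt n) (j : Fin n) :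
    Kal n χ (j, true) + Kal n (χ - eps n + delta n j) (j, false) =
      (eWt n (χ + rho0 n) - eWt n (χ + rho0 n - 2 • eps n)) *
        ∏ b ∈ (Finset.univ.erase (j, true)).erase (j, false), (1 - eWt n (-oddRoot n b)) := by
  have h_erase : (Finset.univ.erase (j, false)).erase (j, true) =
      (Finset.univ.erase (j, true)).erase (j, false) := Finset.erase_right_comm
  rw [Kal, Kal, ← Finset.mul_prod_erase _ _ (by simp : (j, false) ∈ Finset.univ.erase (j, true)),
    ← Finset.mul_prod_erase _ _ (by simp : (j, true) ∈ Finset.univ.erase (j, false)), h_erase]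
  have h_shift : χ - eps n + delta n j + rho0 n = χ + rho0 n + -(eps n - delta n j) := by abel
  have h_double : χ + rho0 n - 2 • eps n =
      χ - eps n + delta n j + rho0 n + -(eps n + delta n j) := by abel
  simp only [oddRoot, if_true, Bool.false_eq_true, if_false, h_double, eWt_add, h_shift]
  ring

lemma weylAct_signFlip_prod_erase_erase (j : Fin n) :
    weylAct 1 (signFlip j)
        (∏ b ∈ (Finset.univ.erase (j, true)).erase (j, false), (1 - eWt n (-oddRoot n b))) =
      ∏ b ∈ (Finset.univ.erase (j, true)).erase (j, false), (1 - eWt n (-oddRoot n b)) := by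
  rw [map_prod]
  refine Finset.prod_congr rfl fun ⟨i, c⟩ hb => ?_
  have hij : j ≠ i := by
    rintro rfl
    cases c <;> simp at hb
  rw [map_sub, map_one, weylAct_signFlip_eWt]
  cases c <;> simp [oddRoot, eps, delta, hij]

end

/-- If `(χ+ρ, ε+δ_j) = (χ+ρ, ε−δ_j) = 0` then `{K^{ε+δ_j}_χ} = −{K^{ε−δ_j}_{χ−ε+δ_j}}`. -/
theorem alt_Kal_reflect (n : ℕ) (χ : Wt n) (j : Fin n)
    (h1 : pairPlus n (χ + rho n) j = 0)
    (h2 : pairMinus n (χ + rho n) j = 0) :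
    alt n (Kal n χ (j, true)) = - alt n (Kal n (χ - eps n + delta n j) (j, false)) := by
  have hμ : (χ + rho0 n).2 j = 0 := by
    simp only [pairPlus, pairMinus, rho, rho0, Prod.fst_add, Prod.snd_add] at h1 h2 ⊢
    omega
  rw [eq_neg_iff_add_eq_zero, ← alt_add, Kal_add_Kal_sub_eps_add_delta]
  refine alt_eq_zero_of_weylAct_signFlip_eq (j := j) ?_
  rw [map_mul, map_sub, weylAct_signFlip_eWt hμ, weylAct_signFlip_eWt (by simpa [eps] using hμ),
    weylAct_signFlip_prod_erase_erase]
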